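/- In the framed sphere braid Lie algebra 𝔣𝔅₅, the element X₅₂ + X₅₃ equals −X₅₁ − X₅₄ − X₅₅ and X₂₄ + X₃₄ equals −X₁₄ − X₄₄ − X₅₄; moreover X₅₁ commutes with X₁₅ + X₄₁ + X₅₄ + X₄₄, so that for any formal series Φ one has Φ(X₅₂ + X₅₃, X₂₄ + X₃₄) = Φ(X₄₁, X₁₅). -/

import Mathlib

open FreeLieAlgebra

/-- Defining relations of the framed Drinfeld–Kohno Lie algebra 𝔣𝔱ₙ (generators out of
the range `1 ≤ i, j ≤ n` are set to zero). -/
def ftRels (k : Type) [Field k] (n : ℕ) : Set (FreeLieAlgebra k (ℕ × ℕ)) :=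
  { x | (∃ i j : ℕ, x = of k (i, j) - of k (j, i)) ∨
        (∃ i j : ℕ, ¬(1 ≤ i ∧ i ≤ n ∧ 1 ≤ j ∧ j ≤ n) ∧ x = of k (i, j)) ∨
        (∃ i j l m : ℕ, i ≠ l ∧ i ≠ m ∧ j ≠ l ∧ j ≠ m ∧ x = ⁅of k (i, j), of k (l, m)⁆) ∨
        (∃ i j l : ℕ, i ≠ j ∧ j ≠ l ∧ i ≠ l ∧ x = ⁅of k (i, j), of k (l, i) + of k (l, j)⁆) ∨
        (∃ i j l : ℕ, x = ⁅of k (i, i), of k (j, l)⁆) }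

/-- Defining relations of the framed sphere braid Lie algebra 𝔣𝔅ₘ: those of 𝔣𝔱ₘ
together with the residue relations `Σ_{j=1}^m X_{ij} = 0` for each `1 ≤ i ≤ m`. -/
def fBRels (k : Type) [Field k] (m : ℕ) : Set (FreeLieAlgebra k (ℕ × ℕ)) :=
  ftRels k m ∪ { x | ∃ i : ℕ, 1 ≤ i ∧ i ≤ m ∧ x = ∑ j ∈ Finset.Icc 1 m, of k (i, j) }

noncomputable def fBIdeal (k : Type) [Field k] (m : ℕ) : LieIdeal k (FreeLieAlgebra k (ℕ × ℕ)) :=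
  LieSubmodule.lieSpan k _ (fBRels k m)

/-- The framed sphere braid Lie algebra 𝔣𝔅ₘ. -/
abbrev fB (k : Type) [Field k] (m : ℕ) := FreeLieAlgebra k (ℕ × ℕ) ⧸ fBIdeal k m

/-- The completed enveloping algebra placeholder: the universal enveloping algebra of 𝔣𝔅₅. -/
abbrev UfB (k : Type) [Field k] := UniversalEnvelopingAlgebra k (fB k 5)

/-- The image `X i j` of the generator `X_{ij}` of 𝔣𝔅₅ in its enveloping algebra. -/
noncomputable def X (k : Type) [Field k] (i j : ℕ) : UfB k :=
  UniversalEnvelopingAlgebra.ι k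
    (LieSubmodule.Quotient.mk' (fBIdeal k 5) (of k (i, j)))


section helpers
variable (k : Type) [Field k]
attribute [local instance 100] LieRing.ofAssociativeRing

lemma mk_rel {x : FreeLieAlgebra k (ℕ × ℕ)} (hx : x ∈ fBRels k 5) :
    LieSubmodule.Quotient.mk' (fBIdeal k 5) x = 0 :=
  (LieSubmodule.Quotient.mk_eq_zero _).mpr (LieSubmodule.subset_lieSpan hx)

lemma Xsym (i j : ℕ) : X k i j = X k j i := by
  have h := mk_rel k (Or.inl (Or.inl ⟨i, j, rfl⟩))
  rw [map_sub, sub_eq_zero] at h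
  unfold X; rw [h]

lemma Xsum (i : ℕ) (h1 : 1 ≤ i) (h5 : i ≤ 5) :
    X k i 1 + X k i 2 + X k i 3 + X k i 4 + X k i 5 = 0 := by
  have h := mk_rel k (Or.inr ⟨i, h1, h5, rfl⟩)
  rw [show (Finset.Icc 1 5 : Finset ℕ) = {1, 2, 3, 4, 5} by decide,
    Finset.sum_insert (by decide), Finset.sum_insert (by decide),
    Finset.sum_insert (by decide), Finset.sum_insert (by decide),
    Finset.sum_singleton] at h
  have h2 := congrArg (UniversalEnvelopingAlgebra.ι k) h
  simp only [map_add, map_zero] at h2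
  unfold X
  rw [← h2]; abel

lemma comm_of_bracket (a b : fB k 5) (h : ⁅a, b⁆ = 0) :
    Commute (UniversalEnvelopingAlgebra.ι k a) (UniversalEnvelopingAlgebra.ι k b) := by
  have h2 := (UniversalEnvelopingAlgebra.ι (R := k) (L := fB k 5)).map_lie a b
  rw [h, map_zero, Ring.lie_def, eq_comm, sub_eq_zero] at h2
  exact h2

lemma comm_tri (i j l : ℕ) (hij : i ≠ j) (hjl : j ≠ l) (hil : i ≠ l) :
    Commute (X k i j) (X k l i + X k l j) := by
  have h := mk_rel k (Or.inl (Or.inr (Or.inr (Or.inr (Or.inl ⟨i, j, l, hij, hjl, hil, rfl⟩)))))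
  rw [LieSubmodule.Quotient.mk'_apply, LieSubmodule.Quotient.mk_bracket] at h
  have h2 := comm_of_bracket k _ _ h
  rw [show LieSubmodule.Quotient.mk (N := fBIdeal k 5) (of k (l, i) + of k (l, j)) =
      LieSubmodule.Quotient.mk' (fBIdeal k 5) (of k (l, i)) +
      LieSubmodule.Quotient.mk' (fBIdeal k 5) (of k (l, j)) from rfl,
    map_add] at h2
  exact h2

lemma comm_diag (i j l : ℕ) : Commute (X k i i) (X k j l) := by
  have h := mk_rel k (Or.inl (Or.inr (Or.inr (Or.inr (Or.inr ⟨i, j, l, rfl⟩)))))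
  rw [LieSubmodule.Quotient.mk'_apply, LieSubmodule.Quotient.mk_bracket] at h
  exact comm_of_bracket k _ _ h

end helpers

/-- In 𝔣𝔅₅, `X₅₂ + X₅₃ = −X₅₁ − X₅₄ − X₅₅` and `X₂₄ + X₃₄ = −X₁₄ − X₄₄ − X₅₄`;
moreover `X₅₁` commutes with `X₁₅ + X₄₁ + X₅₄ + X₄₄`, so that for any two-variable
evaluation `Φ` unchanged by adding commuting corrections to its arguments one has
`Φ(X₅₂ + X₅₃, X₂₄ + X₃₄) = Φ(X₄₁, X₁₅)`. -/
theorem sphereBraid5_middle_term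
    (k : Type) [Field k] [CharZero k]
    (Φ : UfB k → UfB k → UfB k)
    (hΦl : ∀ a b z : UfB k, Commute z a → Commute z b → Φ (a + z) b = Φ a b)
    (hΦr : ∀ a b z : UfB k, Commute z a → Commute z b → Φ a (b + z) = Φ a b) :
    X k 5 2 + X k 5 3 = -X k 5 1 - X k 5 4 - X k 5 5 ∧
    X k 2 4 + X k 3 4 = -X k 1 4 - X k 4 4 - X k 5 4 ∧
    Commute (X k 1 5 + X k 4 1 + X k 5 4 + X k 4 4) (X k 5 1) ∧
    Φ (X k 5 2 + X k 5 3) (X k 2 4 + X k 3 4) = Φ (X k 4 1) (X k 1 5) := by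
  have e5 := Xsum k 5 (by norm_num) (by norm_num)
  have e4 := Xsum k 4 (by norm_num) (by norm_num)
  -- Goal 1
  have g1 : X k 5 2 + X k 5 3 = -X k 5 1 - X k 5 4 - X k 5 5 := by
    calc X k 5 2 + X k 5 3
        = (X k 5 1 + X k 5 2 + X k 5 3 + X k 5 4 + X k 5 5) - X k 5 1 - X k 5 4 - X k 5 5 := by
          abel
      _ = -X k 5 1 - X k 5 4 - X k 5 5 := by rw [e5]; abel
  -- Goal 2
  have g2 : X k 2 4 + X k 3 4 = -X k 1 4 - X k 4 4 - X k 5 4 := by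
    rw [Xsym k 2 4, Xsym k 3 4, Xsym k 1 4, Xsym k 5 4]
    calc X k 4 2 + X k 4 3
        = (X k 4 1 + X k 4 2 + X k 4 3 + X k 4 4 + X k 4 5) - X k 4 1 - X k 4 4 - X k 4 5 := by
          abel
      _ = -X k 4 1 - X k 4 4 - X k 4 5 := by rw [e4]; abel
  -- commuting facts (S = X 5 1, T = X 4 5, A = X 4 1)
  have h1 : Commute (X k 4 1) (X k 4 5 + X k 5 1) := by
    have := comm_tri k 4 1 5 (by norm_num) (by norm_num) (by norm_num)
    rwa [Xsym k 5 4] at this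
  have h2 : Commute (X k 5 1) (X k 4 5 + X k 4 1) :=
    comm_tri k 5 1 4 (by norm_num) (by norm_num) (by norm_num)
  have h3 : Commute (X k 4 5) (X k 4 1 + X k 5 1) := by
    have := comm_tri k 4 5 1 (by norm_num) (by norm_num) (by norm_num)
    rwa [Xsym k 1 4, Xsym k 1 5] at this
  -- Goal 3
  have g3 : Commute (X k 1 5 + X k 4 1 + X k 5 4 + X k 4 4) (X k 5 1) := by
    rw [Xsym k 1 5, Xsym k 5 4]
    have hAT : Commute (X k 4 1 + X k 4 5) (X k 5 1) := by
      rw [add_comm]; exact h2.symm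
    have hmain : Commute (X k 5 1 + (X k 4 1 + X k 4 5)) (X k 5 1) :=
      (Commute.refl _).add_left hAT
    rw [← add_assoc] at hmain
    exact hmain.add_left (comm_diag k 4 5 1)
  refine ⟨g1, g2, g3, ?_⟩
  -- Goal 4
  have cS' : Commute (X k 4 5 + X k 4 1 + X k 5 1) (X k 5 1) :=
    h2.symm.add_left (Commute.refl _)
  have cT' : Commute (X k 4 5 + X k 4 1 + X k 5 1) (X k 4 5) := by
    have : Commute (X k 4 5 + (X k 4 1 + X k 5 1)) (X k 4 5) :=
      (Commute.refl _).add_left h3.symm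
    rwa [← add_assoc] at this
  have cA2 : Commute (X k 5 1 + X k 4 5 + X k 4 1) (X k 4 1) := by
    have hST : Commute (X k 5 1 + X k 4 5) (X k 4 1) := by
      rw [add_comm]; exact h1.symm
    exact hST.add_left (Commute.refl _)
  have cS2 : Commute (X k 5 1 + X k 4 5 + X k 4 1) (X k 5 1) := by
    have : Commute (X k 5 1 + (X k 4 5 + X k 4 1)) (X k 5 1) :=
      (Commute.refl _).add_left h2.symm
    rwa [← add_assoc] at this
  set S := X k 5 1
  set T := X k 4 5
  set A := X k 4 1
  set C44 := X k 4 4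
  set C55 := X k 5 5
  have czA : Commute (-(S + T + A) - C55) A := cA2.neg_left.sub_left (comm_diag k 5 4 1)
  have czS : Commute (-(S + T + A) - C55) S := cS2.neg_left.sub_left (comm_diag k 5 5 1)
  have cz'S : Commute (-(T + A + S) - C44) S := cS'.neg_left.sub_left (comm_diag k 4 5 1)
  have cz'T : Commute (-(T + A + S) - C44) T := cT'.neg_left.sub_left (comm_diag k 4 4 5)
  have cz'C55 : Commute (-(T + A + S) - C44) C55 := by
    have hTAS : Commute (T + A + S) C55 :=
      (((comm_diag k 5 4 5).symm.add_left (comm_diag k 5 4 1).symm).add_left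
        (comm_diag k 5 5 1).symm)
    exact hTAS.neg_left.sub_left (comm_diag k 5 4 4).symm
  have cz'arg1 : Commute (-(T + A + S) - C44) (-S - T - C55) :=
    (cz'S.neg_right.sub_right cz'T).sub_right cz'C55
  have stepA := hΦr (-S - T - C55) S (-(T + A + S) - C44) cz'arg1 cz'S
  rw [show S + (-(T + A + S) - C44) = -A - C44 - T by abel] at stepA
  have stepB := hΦl A S (-(S + T + A) - C55) czA czS
  rw [show A + (-(S + T + A) - C55) = -S - T - C55 by abel] at stepB
  rw [g1, g2, Xsym k 1 5, Xsym k 1 4, Xsym k 5 4]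
  exact stepA.trans stepB
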